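/- arXiv:0812.2300 — 2 statements merged into one kernel-verified Lean document; each statement's English description precedes it below -/
import Mathlib

section
/- Let L be an algebraic lattice (a complete lattice in which every element is a join of compact elements) which is modular. Then L is well-founded if and only if the join-semilattice K(L) of compact elements of L is well-founded and contains no infinite independent subset. -/
open Set

/-- The poset `Ω(ω*)`: pairs `(i,j)` of naturals with `i < j`,
ordered by `(i,j) ≤ (i',j')` iff `i' ≤ i ∧ j ≤ j'`. We only need the carrier and the join. -/
abbrev OmegaStar : Type := {p : ℕ × ℕ // p.1 < p.2}

/-- The join in `Ω(ω*)`: `(i,j) ⊔ (i',j') = (min i i', max j j')`. -/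
def omegaJoin (a b : OmegaStar) : OmegaStar :=
  ⟨(min a.1.1 b.1.1, max a.1.2 b.1.2),
    lt_of_le_of_lt (min_le_left _ _) (lt_of_lt_of_le a.2 (le_max_left _ _))⟩

/-- `Ω̲(ω*)`: `Ω(ω*)` with a new least element (`none`) adjoined. -/
abbrev OmegaStarBot : Type := Option OmegaStar

/-- The join in `Ω̲(ω*)`. -/
def omegaBotJoin : OmegaStarBot → OmegaStarBot → OmegaStarBot
  | none, b => b
  | a, none => a
  | some a, some b => some (omegaJoin a b)

/-- `I_{<ω}(Q)`: the finitely generated initial segments of `Q`,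
i.e. downward closures of finite subsets of `Q` (including `∅`). -/
def FinGenInit (Q : Type*) [Preorder Q] : Set (Set Q) :=
  {S | ∃ F : Finset Q, S = {x | ∃ y ∈ F, x ≤ y}}

/-- An ideal of a poset: a nonempty, up-directed, downward closed subset. -/
def IsIdeal {P : Type*} [Preorder P] (I : Set P) : Prop :=
  I.Nonempty ∧ (∀ x ∈ I, ∀ y ∈ I, ∃ z ∈ I, x ≤ z ∧ y ≤ z) ∧
    ∀ x y : P, x ≤ y → y ∈ I → x ∈ I

/-- A completely meet-irreducible ideal: an ideal `I` for which there is an ideal `J ⊋ I`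
contained in every ideal strictly containing `I`. -/
def CMIdeal {P : Type*} [Preorder P] (I : Set P) : Prop :=
  IsIdeal I ∧ ∃ J : Set P, IsIdeal J ∧ I ⊂ J ∧ ∀ K : Set P, IsIdeal K → I ⊂ K → J ⊆ K

/-- An ideal of a sub-poset `P` of `α`: a subset of `P`, nonempty, up-directed,
downward closed within `P`. -/
def IsIdealIn {α : Type*} [Preorder α] (P I : Set α) : Prop :=
  I ⊆ P ∧ I.Nonempty ∧ (∀ x ∈ I, ∀ y ∈ I, ∃ z ∈ I, x ≤ z ∧ y ≤ z) ∧
    ∀ x ∈ P, ∀ y ∈ I, x ≤ y → x ∈ I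

/-- A completely meet-irreducible ideal of the sub-poset `P`. -/
def CMIdealIn {α : Type*} [Preorder α] (P I : Set α) : Prop :=
  IsIdealIn P I ∧ ∃ J : Set α, IsIdealIn P J ∧ I ⊂ J ∧
    ∀ K : Set α, IsIdealIn P K → I ⊂ K → J ⊆ K

/-- `{x} ∨ J`, the ideal `{z : z ≤ x ⊔ y for some y ∈ J}`. -/
def JoinUp {P : Type*} [SemilatticeSup P] (x : P) (J : Set P) : Set P :=
  {z | ∃ y ∈ J, z ≤ x ⊔ y}

/-- A nonempty chain `𝓘` of ideals is separating if for every `I ∈ 𝓘` with `I ≠ ⋃𝓘` and every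
`x ∈ ⋃𝓘 \ I` there is `J ∈ 𝓘` with `I ⊄ {x} ∨ J`. -/
def Separating {P : Type*} [SemilatticeSup P] (𝓘 : Set (Set P)) : Prop :=
  ∀ I ∈ 𝓘, I ≠ ⋃₀ 𝓘 → ∀ x ∈ (⋃₀ 𝓘) \ I, ∃ J ∈ 𝓘, ¬ I ⊆ JoinUp x J

/-- An independent subset of a join-semilattice: no member is below the join of finitely many
of the others. -/
def IndepSet {P : Type*} [SemilatticeSup P] (X : Set P) : Prop :=
  ∀ x ∈ X, ∀ F : Finset P, ∀ hF : F.Nonempty, ↑F ⊆ X \ {x} → ¬ x ≤ F.sup' hF id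

/-- `ℱ^{<ω}`: unions of finite subfamilies of `ℱ` (including `∅`). -/
def finUnions {α : Type*} (ℱ : Set (Set α)) : Set (Set α) :=
  {S | ∃ G : Finset (Set α), ↑G ⊆ ℱ ∧ S = ⋃₀ ↑G}

/-- `ℱ^∪`: unions of arbitrary subfamilies of `ℱ`. -/
def arbUnions {α : Type*} (ℱ : Set (Set α)) : Set (Set α) :=
  {S | ∃ G ⊆ ℱ, S = ⋃₀ G}

/-- Compact element of a complete lattice, with the definition Mathlib had in December 2024. -/
def CompleteLattice.IsCompactElement {α : Type*} [CompleteLattice α] (k : α) :=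
  ∀ s : Set α, k ≤ sSup s → ∃ t : Finset α, ↑t ⊆ s ∧ k ≤ t.sup id


/-!
Let `a` be strictly decreasing in an algebraic modular lattice. If some compact `g ≤ a 0` and
some `N` satisfy `a N ≤ g ⊔ a N'` for all `N' > N`, then by modularity `g ⊓ a (N + m)` is
strictly decreasing below `g`. Otherwise a greedy choice yields compacts `x k ≤ a (N k)` with
`x k ≰ x 0 ⊔ ⋯ ⊔ x (k - 1) ⊔ a (N (k + 1))`; as all later `x j` lie below `a (N (k + 1))`, these
form an infinite independent set. So, absent infinite independent sets of compacts, every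
descending sequence yields a compact below its first term with a descending sequence strictly
below it, and iterating contradicts the well-foundedness of `K(L)`. Conversely, an infinite
independent set `{e n}` of compacts gives the strictly decreasing sequence `⨆ m ≥ n, e m`.
-/

theorem CompleteLattice.isCompactElement_eq_isCompactElement {α : Type*} [CompleteLattice α] :
    @CompleteLattice.IsCompactElement α _ = _root_.IsCompactElement :=
  funext fun k => propext (isCompactElement_iff_exists_le_sSup_of_le_sSup α k).symm

theorem IsCompactElement.sup {α : Type*} [CompleteLattice α] {a b : α}
    (ha : IsCompactElement a) (hb : IsCompactElement b) : IsCompactElement (a ⊔ b) := by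
  classical
  simpa using CompleteLattice.isCompactElement_finsetSup (f := id) {a, b} (by simp [ha, hb])

section SemilatticeSup

variable {P : Type*} [SemilatticeSup P] [OrderBot P]

theorem injective_of_not_le_finset_sup {ι : Type*} [DecidableEq ι] {f : ι → P}
    (h : ∀ i (s : Finset ι), i ∉ s → ¬ f i ≤ s.sup f) : Function.Injective f := by
  intro i j hij
  by_contra hne
  exact h i {j} (Finset.notMem_singleton.2 hne) (by rw [Finset.sup_singleton, hij])

theorem indepSet_range_of_not_le_finset_sup {ι : Type*} {f : ι → P}
    (h : ∀ i (s : Finset ι), i ∉ s → ¬ f i ≤ s.sup f) : IndepSet (range f) := by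
  classical
  rintro _ ⟨i, rfl⟩ F hF hFf hle
  have hpre : ∀ z ∈ F, ∃ j, f j = z := fun z hz => (hFf hz).1
  have : Nonempty ι := ⟨i⟩
  choose! j hj using hpre
  refine h i (F.image j) (fun hi => ?_) (hle.trans (Finset.sup'_le _ _ fun z hz => ?_))
  · obtain ⟨z, hz, hzi⟩ := Finset.mem_image.1 hi
    exact (hFf hz).2 (by rw [← hj z hz, hzi]; rfl)
  · rw [id, ← hj z hz]
    exact Finset.le_sup (Finset.mem_image_of_mem j hz)

theorem not_le_finset_sup_of_not_le_sup_range {x c : ℕ → P} (hc : Antitone c)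
    (hxc : ∀ k, x (k + 1) ≤ c k) (hx : ∀ k, ¬ x k ≤ (Finset.range k).sup x ⊔ c k)
    (i : ℕ) (s : Finset ℕ) (hi : i ∉ s) : ¬ x i ≤ s.sup x := by
  refine fun hle => hx i (hle.trans (Finset.sup_le fun j hj => ?_))
  rcases lt_or_gt_of_ne (ne_of_mem_of_not_mem hj hi) with hji | hij
  · exact le_sup_of_le_left (Finset.le_sup (Finset.mem_range.2 hji))
  · obtain ⟨k, rfl⟩ : ∃ k, j = k + 1 := ⟨j - 1, by omega⟩
    exact le_sup_of_le_right ((hxc k).trans (hc (by omega)))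

end SemilatticeSup

theorem strictAnti_inf_of_le_sup {L : Type*} [Lattice L] [IsModularLattice L] {a : ℕ → L} {g : L}
    (ha : StrictAnti a) (h : ∀ n, a n ≤ g ⊔ a (n + 1)) : StrictAnti fun n => g ⊓ a n :=
  strictAnti_nat_of_succ_lt fun n => by
    simpa only [inf_comm g] using inf_lt_inf_of_lt_of_sup_le_sup (ha n.lt_succ_self)
      (sup_le ((h n).trans_eq (sup_comm _ _)) le_sup_right)

section CompleteLattice

variable {L : Type*} [CompleteLattice L]

theorem IndepSet.not_le_sSup {X Y : Set L} (hX : IndepSet X) {x : L} (hxX : x ∈ X)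
    (hx : IsCompactElement x) (hYX : Y ⊆ X \ {x}) (hY : Y.Nonempty) : ¬ x ≤ sSup Y := by
  classical
  intro hxY
  obtain ⟨t, htY, hxt⟩ :=
    (CompleteLattice.isCompactElement_iff_exists_le_sSup_of_le_sSup L x).1 hx Y hxY
  obtain ⟨y, hy⟩ := hY
  refine hX x hxX (insert y t) (Finset.insert_nonempty y t) ?_ ?_
  · rw [Finset.coe_insert]
    exact (insert_subset hy htY).trans hYX
  · rw [Finset.sup'_eq_sup, Finset.sup_insert]
    exact hxt.trans le_sup_right

theorem IndepSet.finite_of_wellFoundedLT [WellFoundedLT L] {X : Set L} (hX : IndepSet X)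
    (hc : ∀ x ∈ X, IsCompactElement x) : X.Finite := by
  by_contra hinf
  let e : ℕ ↪ X := Set.Infinite.natEmbedding X hinf
  let f : ℕ → L := fun n => e n
  have hf : Function.Injective f := Subtype.val_injective.comp e.injective
  let b : ℕ → L := fun n => sSup (f '' Ici n)
  refine not_strictAnti_of_wellFoundedLT b (strictAnti_nat_of_succ_lt fun n => ?_)
  refine lt_of_le_not_ge (sSup_le_sSup (image_mono (Ici_subset_Ici.2 n.le_succ))) fun hle => ?_
  have hfn : f n ≤ b n := le_sSup (mem_image_of_mem f self_mem_Ici)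
  refine hX.not_le_sSup (e n).2 (hc _ (e n).2) ?_ ⟨f (n + 1), mem_image_of_mem f self_mem_Ici⟩
    (hfn.trans hle)
  rintro _ ⟨m, hm, rfl⟩
  exact ⟨(e m).2, fun h => (Nat.succ_le_iff.1 hm).ne' (hf h)⟩

variable [IsCompactlyGenerated L]

theorem exists_not_le_sup_range_of_forall_not_le {a : ℕ → L} (ha : Antitone a)
    (h : ∀ N g, IsCompactElement g → g ≤ a 0 → ∃ N' > N, ¬ a N ≤ g ⊔ a N') :
    ∃ x c : ℕ → L, (∀ k, IsCompactElement (x k)) ∧ Antitone c ∧ (∀ k, x (k + 1) ≤ c k) ∧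
      ∀ k, ¬ x k ≤ (Finset.range k).sup x ⊔ c k := by
  have step : ∀ N g, IsCompactElement g → g ≤ a 0 → ∃ e N', IsCompactElement e ∧ e ≤ a N ∧
      N < N' ∧ ¬ e ≤ g ⊔ a N' := by
    intro N g hg hga
    obtain ⟨N', hNN', hN⟩ := h N g hg hga
    obtain ⟨e, he, heN, heg⟩ : ∃ e, IsCompactElement e ∧ e ≤ a N ∧ ¬ e ≤ g ⊔ a N' := by
      by_contra! hcon
      exact hN (le_iff_compact_le_imp.2 hcon)
    exact ⟨e, N', he, heN, hNN', heg⟩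
  choose! e M he heN hM heM using step
  -- `p k = (N k, x 0 ⊔ ⋯ ⊔ x (k - 1))`, where `x k` is the compact chosen from the state `p k`
  let p : ℕ → ℕ × L := fun k => Nat.rec (0, ⊥) (fun _ q => (M q.1 q.2, q.2 ⊔ e q.1 q.2)) k
  let x : ℕ → L := fun k => e (p k).1 (p k).2
  have hp : ∀ k, (p k).2 = (Finset.range k).sup x ∧ IsCompactElement (p k).2 ∧ (p k).2 ≤ a 0 := by
    intro k
    induction k with
    | zero =>
      have hbot : IsCompactElement (⊥ : L) := by
        simpa using CompleteLattice.isCompactElement_finsetSup (f := id) (∅ : Finset L) (by simp)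
      exact ⟨rfl, hbot, bot_le⟩
    | succ k ih =>
      obtain ⟨hk, hc, ha0⟩ := ih
      refine ⟨?_, hc.sup (he _ _ hc ha0), sup_le ha0 ((heN _ _ hc ha0).trans (ha (Nat.zero_le _)))⟩
      change (p k).2 ⊔ x k = _
      rw [Finset.range_add_one, Finset.sup_insert, hk, sup_comm]
  have hN : StrictMono fun k => (p k).1 :=
    strictMono_nat_of_lt_succ fun k => hM _ _ (hp k).2.1 (hp k).2.2
  refine ⟨x, fun k => a (p (k + 1)).1, fun k => he _ _ (hp k).2.1 (hp k).2.2,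
    fun i j hij => ha (hN.monotone (Nat.succ_le_succ hij)),
    fun k => heN _ _ (hp (k + 1)).2.1 (hp (k + 1)).2.2, fun k => ?_⟩
  rw [← (hp k).1]
  exact heM _ _ (hp k).2.1 (hp k).2.2

variable [IsModularLattice L]

theorem exists_compact_strictAnti_lt
    (hfin : ∀ X : Set L, (∀ x ∈ X, IsCompactElement x) → IndepSet X → X.Finite)
    {a : ℕ → L} (ha : StrictAnti a) :
    ∃ g, IsCompactElement g ∧ g ≤ a 0 ∧ ∃ b : ℕ → L, StrictAnti b ∧ ∀ n, b n < g := by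
  by_cases hF : ∃ N g, IsCompactElement g ∧ g ≤ a 0 ∧ ∀ N' > N, a N ≤ g ⊔ a N'
  · obtain ⟨N, g, hg, hga, hN⟩ := hF
    have hgb : StrictAnti fun m => g ⊓ a (N + m) :=
      strictAnti_inf_of_le_sup (fun m n hmn => ha (by omega))
        fun m => (ha.antitone (Nat.le_add_right N m)).trans (hN _ (by omega))
    exact ⟨g, hg, hga, fun m => g ⊓ a (N + (m + 1)), fun m n hmn => hgb (by omega),
      fun m => (hgb m.succ_pos).trans_le inf_le_left⟩
  · push Not at hF
    obtain ⟨x, c, hx, hc, hxc, hxs⟩ := exists_not_le_sup_range_of_forall_not_le ha.antitone hF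
    have hindep := not_le_finset_sup_of_not_le_sup_range hc hxc hxs
    exact absurd (hfin _ (forall_mem_range.2 hx) (indepSet_range_of_not_le_finset_sup hindep))
      (infinite_range_of_injective (injective_of_not_le_finset_sup hindep))

theorem wellFoundedLT_of_wellFoundedLT_compact [WellFoundedLT {c : L // IsCompactElement c}]
    (hfin : ∀ X : Set L, (∀ x ∈ X, IsCompactElement x) → IndepSet X → X.Finite) :
    WellFoundedLT L := by
  have below (g : {c : L // IsCompactElement c}) (b : ℕ → L) (hb : StrictAnti b) :
      ¬ ∀ n, b n < g := by
    induction g using WellFoundedLT.induction generalizing b with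
    | _ g ih =>
      intro hbg
      obtain ⟨g', hg', hg'b, b', hb', hb'g'⟩ := exists_compact_strictAnti_lt hfin hb
      exact ih ⟨g', hg'⟩ (hg'b.trans_lt (hbg 0)) b' hb' hb'g'
  refine ⟨RelEmbedding.wellFounded_iff_isEmpty.2 ⟨fun f => ?_⟩⟩
  obtain ⟨g, hg, -, b, hb, hbg⟩ :=
    exists_compact_strictAnti_lt hfin fun m n hmn => f.map_rel_iff.2 hmn
  exact below ⟨g, hg⟩ b hb hbg

end CompleteLattice

/-- An algebraic modular lattice `L` is well-founded iff `K(L)` is well-founded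
and contains no infinite independent subset. -/
theorem algebraic_modular_wellFounded_iff {L : Type*} [CompleteLattice L] [IsModularLattice L]
    (halg : ∀ x : L, ∃ s : Set L, (∀ c ∈ s, CompleteLattice.IsCompactElement c) ∧ sSup s = x) :
    WellFounded ((· < ·) : L → L → Prop) ↔
      (WellFounded (fun a b : {c : L // CompleteLattice.IsCompactElement c} => a < b) ∧
        ¬ ∃ X : Set L, (∀ x ∈ X, CompleteLattice.IsCompactElement x) ∧ X.Infinite ∧
            IndepSet X) := by
  rw [CompleteLattice.isCompactElement_eq_isCompactElement] at halg ⊢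
  have : IsCompactlyGenerated L := ⟨halg⟩
  constructor
  · intro hwf
    have : WellFoundedLT L := ⟨hwf⟩
    exact ⟨wellFounded_lt, fun ⟨X, hc, hinf, hX⟩ => hinf (hX.finite_of_wellFoundedLT hc)⟩
  · rintro ⟨hK, hind⟩
    have : WellFoundedLT {c : L // IsCompactElement c} := ⟨hK⟩
    refine (wellFoundedLT_of_wellFoundedLT_compact fun X hc hX => ?_).wf
    exact Set.not_infinite.1 fun hinf => hind ⟨X, hc, hinf, hX⟩
end

section
/- A join-semilattice P contains an infinite independent subset if and only if P has an infinite separating chain of ideals. -/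
open Set

/-!
An injective independent sequence `a` yields the strictly decreasing chain of ideals `Iₙ`
generated by the tail `{aₖ | k ≥ n}`; it separates because an element `x` of the union lies
below a finite join of the `aₖ`, and an `aᵢ` with `i` beyond those indices lies in `Iₙ` but not
in `{x} ∨ I_{i+1}`. Conversely, a separating chain lets us pick recursively `Iₙ₊₁ ⊂ Iₙ` in the
chain, `aₙ ∈ Iₙ` and `bₙ₊₁ = bₙ ⊔ aₙ` with `aₙ ∉ {bₙ} ∨ Iₙ₊₁`. Every `aₖ` with `k < n` lies
below `bₙ` and every `aₖ` with `k > n` in `Iₙ₊₁`, so `aₙ` is below no finite join of the others.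
-/

section

variable {P : Type*} [SemilatticeSup P] {ι : Type*}

theorem IsIdeal.supClosed {I : Set P} (hI : IsIdeal I) : SupClosed I := by
  intro x hx y hy
  obtain ⟨z, hz, hxz, hyz⟩ := hI.2.1 x hx y hy
  exact hI.2.2 _ z (sup_le hxz hyz) hz

theorem IsChain.supClosed_sUnion {𝓘 : Set (Set P)} (h𝓘 : ∀ I ∈ 𝓘, SupClosed I)
    (hc : IsChain (· ⊆ ·) 𝓘) : SupClosed (⋃₀ 𝓘) := by
  rintro x ⟨I, hI, hx⟩ y ⟨J, hJ, hy⟩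
  rcases hc.total hI hJ with hIJ | hJI
  · exact ⟨J, hJ, h𝓘 J hJ (hIJ hx) hy⟩
  · exact ⟨I, hI, h𝓘 I hI hx (hJI hy)⟩

def IndepFamily (a : ι → P) : Prop :=
  ∀ i (S : Finset ι) (hS : S.Nonempty), i ∉ S → ¬ a i ≤ S.sup' hS a

theorem IndepSet.indepFamily {a : ι → P} {X : Set P} (hX : IndepSet X)
    (ha : Function.Injective a) (haX : ∀ i, a i ∈ X) : IndepFamily a := by
  classical
  intro i S hS hiS hle
  refine hX (a i) (haX i) (S.image a) (hS.image a) ?_ (by rwa [Finset.sup'_image])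
  intro _ hx
  obtain ⟨k, hk, rfl⟩ := Finset.mem_image.1 hx
  exact ⟨haX k, fun h => hiS (ha h ▸ hk)⟩

namespace IndepFamily

variable {a : ι → P}

theorem injective (ha : IndepFamily a) : Function.Injective a := by
  intro i j hij
  by_contra hne
  exact ha i {j} (Finset.singleton_nonempty j) (Finset.notMem_singleton.2 hne) (by simp [hij])

theorem indepSet_range (ha : IndepFamily a) : IndepSet (range a) := by
  classical
  rintro _ ⟨i, rfl⟩ F hF hFsub hle
  obtain ⟨S, -, rfl⟩ := Finset.subset_set_image_iff.1 <| by
    rw [image_univ]; exact hFsub.trans sdiff_subset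
  have hiS : i ∉ S := fun hi => (hFsub (Finset.mem_image_of_mem a hi)).2 rfl
  rw [Finset.sup'_image] at hle
  exact ha i S (Finset.image_nonempty.1 hF) hiS hle

end IndepFamily

section idealSpan

/-- The ideal generated by `a '' s` (empty when `s` is). -/
def idealSpan (a : ι → P) (s : Set ι) : Set P :=
  {z | ∃ S : Finset ι, ∃ hS : S.Nonempty, ↑S ⊆ s ∧ z ≤ S.sup' hS a}

variable {a : ι → P} {s t : Set ι}

theorem apply_mem_idealSpan {i : ι} (hi : i ∈ s) : a i ∈ idealSpan a s :=
  ⟨{i}, Finset.singleton_nonempty i, by simpa using hi, by simp⟩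

theorem mem_idealSpan_of_le {x y : P} (hxy : x ≤ y) (hy : y ∈ idealSpan a s) :
    x ∈ idealSpan a s :=
  let ⟨S, hS, hSs, hyS⟩ := hy
  ⟨S, hS, hSs, hxy.trans hyS⟩

theorem sup_mem_idealSpan_union {x y : P} (hx : x ∈ idealSpan a s) (hy : y ∈ idealSpan a t) :
    x ⊔ y ∈ idealSpan a (s ∪ t) := by
  classical
  obtain ⟨S, hS, hSs, hxS⟩ := hx
  obtain ⟨T, hT, hTt, hyT⟩ := hy
  refine ⟨S ∪ T, hS.mono Finset.subset_union_left, ?_, ?_⟩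
  · rw [Finset.coe_union]; exact union_subset_union hSs hTt
  · rw [Finset.sup'_union hS hT]; exact sup_le_sup hxS hyT

theorem idealSpan_mono : Monotone (idealSpan a) :=
  fun _ _ hst _ ⟨S, hS, hSs, hzS⟩ => ⟨S, hS, hSs.trans hst, hzS⟩

theorem isIdeal_idealSpan (hs : s.Nonempty) : IsIdeal (idealSpan a s) := by
  obtain ⟨i, hi⟩ := hs
  refine ⟨⟨a i, apply_mem_idealSpan hi⟩, fun x hx y hy => ?_, fun x y hxy hy => ?_⟩
  · exact ⟨x ⊔ y, union_self s ▸ sup_mem_idealSpan_union hx hy, le_sup_left, le_sup_right⟩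
  · exact mem_idealSpan_of_le hxy hy

theorem IndepFamily.apply_notMem_idealSpan (ha : IndepFamily a) {i : ι} (hi : i ∉ s) :
    a i ∉ idealSpan a s :=
  fun ⟨S, hS, hSs, hiS⟩ => ha i S hS (fun h => hi (hSs h)) hiS

end idealSpan

namespace IndepFamily

variable {a : ℕ → P}

theorem strictAnti_idealSpan_Ici (ha : IndepFamily a) :
    StrictAnti fun n => idealSpan a (Ici n) :=
  strictAnti_nat_of_succ_lt fun n =>
    (ssubset_iff_of_subset (idealSpan_mono (Ici_subset_Ici.2 n.le_succ))).2
      ⟨a n, apply_mem_idealSpan self_mem_Ici,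
        ha.apply_notMem_idealSpan (by simp)⟩

theorem separating_range_idealSpan_Ici (ha : IndepFamily a) :
    Separating (range fun n => idealSpan a (Ici n)) := by
  rintro _ ⟨n, rfl⟩ - x ⟨⟨_, ⟨_, rfl⟩, S, hS, -, hxS⟩, -⟩
  have hx : x ∈ idealSpan a ↑S := ⟨S, hS, subset_rfl, hxS⟩
  obtain ⟨i, hin, hiS⟩ := (Ici_infinite n).exists_notMem_finset S
  refine ⟨_, ⟨i + 1, rfl⟩, fun hsub => ?_⟩
  obtain ⟨y, hy, hle⟩ := hsub (apply_mem_idealSpan hin)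
  exact ha.apply_notMem_idealSpan (s := ↑S ∪ Ici (i + 1)) (by simp [hiS])
    (mem_idealSpan_of_le hle (sup_mem_idealSpan_union hx hy))

theorem exists_separating_chain (ha : IndepFamily a) :
    ∃ 𝓘 : Set (Set P), (∀ I ∈ 𝓘, IsIdeal I) ∧ IsChain (· ⊆ ·) 𝓘 ∧ 𝓘.Infinite ∧
      Separating 𝓘 :=
  ⟨_, forall_mem_range.2 fun _ => isIdeal_idealSpan nonempty_Ici,
    ha.strictAnti_idealSpan_Ici.antitone.isChain_range,
    infinite_range_of_injective ha.strictAnti_idealSpan_Ici.injective,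
    ha.separating_range_idealSpan_Ici⟩

end IndepFamily

theorem indepFamily_of_not_le_sup {I : ℕ → Set P} {a b : ℕ → P} (hI : ∀ n, IsIdeal (I n))
    (hanti : Antitone I) (haI : ∀ n, a n ∈ I n) (hab : ∀ k n, k < n → a k ≤ b n)
    (hsep : ∀ n, ∀ y ∈ I (n + 1), ¬ a n ≤ b n ⊔ y) : IndepFamily a := by
  classical
  intro n S hS hnS hle
  obtain ⟨y₀, hy₀⟩ := (hI (n + 1)).1
  -- `f` keeps the members with index above `n` and pads the others by `y₀`, so that its
  -- join over `S` lies in `I (n + 1)`.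
  let f : ℕ → P := fun k => if n < k then a k else y₀
  refine hsep n (S.sup' hS f) ((hI (n + 1)).supClosed.finsetSup'_mem hS fun k _ => ?_)
    (hle.trans (Finset.sup'_le hS _ fun k hk => ?_))
  · by_cases h : n < k
    · simpa [f, h] using hanti h (haI k)
    · simpa [f, h] using hy₀
  · rcases lt_or_gt_of_ne (ne_of_mem_of_not_mem hk hnS) with h | h
    · exact le_sup_of_le_left (hab k n h)
    · exact le_sup_of_le_right (by simpa [f, h] using Finset.le_sup' f hk)

theorem exists_mem_sUnion_diff_nonempty {α : Type*} {𝓘 : Set (Set α)} (h : 𝓘.Nontrivial) :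
    ∃ I ∈ 𝓘, (⋃₀ 𝓘 \ I).Nonempty := by
  by_contra! h'
  obtain ⟨A, hA, B, hB, hAB⟩ := h
  have hsub : ∀ {C D}, C ∈ 𝓘 → D ∈ 𝓘 → C ⊆ D :=
    fun hC hD => (subset_sUnion_of_mem hC).trans (sdiff_eq_empty.1 (h' _ hD))
  exact hAB (subset_antisymm (hsub hA hB) (hsub hB hA))

namespace Separating

variable {𝓘 : Set (Set P)}

theorem exists_not_le_sup (hsep : Separating 𝓘) {I : Set P} (hI : I ∈ 𝓘) {b : P}
    (hb : b ∈ ⋃₀ 𝓘 \ I) : ∃ J ∈ 𝓘, ∃ a ∈ I, ∀ y ∈ J, ¬ a ≤ b ⊔ y := by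
  obtain ⟨J, hJ, hIJ⟩ := hsep I hI (fun h => hb.2 (h ▸ hb.1)) b hb
  obtain ⟨a, haI, haJ⟩ := not_subset.1 hIJ
  exact ⟨J, hJ, a, haI, fun y hy hle => haJ ⟨y, hy, hle⟩⟩

theorem exists_indepFamily (h𝓘 : ∀ I ∈ 𝓘, IsIdeal I) (hc : IsChain (· ⊆ ·) 𝓘)
    (hinf : 𝓘.Infinite) (hsep : Separating 𝓘) : ∃ a : ℕ → P, IndepFamily a := by
  let State := {p : Set P × P // p.1 ∈ 𝓘 ∧ p.2 ∈ ⋃₀ 𝓘 \ p.1}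
  have step : ∀ s : State, ∃ t : State, ∃ a ∈ s.1.1,
      t.1.2 = s.1.2 ⊔ a ∧ ∀ y ∈ t.1.1, ¬ a ≤ s.1.2 ⊔ y := by
    rintro ⟨⟨I, b⟩, hI, hb⟩
    obtain ⟨J, hJ, a, haI, haJ⟩ := hsep.exists_not_le_sup hI hb
    have hbaU : b ⊔ a ∈ ⋃₀ 𝓘 :=
      hc.supClosed_sUnion (fun K hK => (h𝓘 K hK).supClosed) hb.1 ⟨I, hI, haI⟩
    have hbaJ : b ⊔ a ∉ J :=
      fun h => haJ a ((h𝓘 J hJ).2.2 _ _ le_sup_right h) le_sup_right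
    exact ⟨⟨(J, b ⊔ a), hJ, hbaU, hbaJ⟩, a, haI, rfl, haJ⟩
  choose next a haI hb_succ hsep_succ using step
  obtain ⟨I₀, hI₀, b₀, hb₀⟩ := exists_mem_sUnion_diff_nonempty hinf.nontrivial
  let s : ℕ → State := fun n => next^[n] ⟨(I₀, b₀), hI₀, hb₀⟩
  have hs : ∀ n, s (n + 1) = next (s n) := fun n => Function.iterate_succ_apply' _ _ _
  have hanti : Antitone fun n => (s n).1.1 := by
    refine antitone_nat_of_succ_le fun n => ?_
    rcases hc.total (s n).2.1 (s (n + 1)).2.1 with h | h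
    · exact absurd le_sup_right (hsep_succ (s n) (a (s n)) (hs n ▸ h (haI (s n))))
    · exact h
  have hb_mono : Monotone fun n => (s n).1.2 :=
    monotone_nat_of_le_succ fun n => by
      simp only [hs n, hb_succ]
      exact le_sup_left
  refine ⟨fun n => a (s n), indepFamily_of_not_le_sup (fun n => h𝓘 _ (s n).2.1) hanti
    (fun n => haI (s n)) (fun k n hkn => ?_) (fun n => hs n ▸ hsep_succ (s n))⟩
  calc a (s k) ≤ (s (k + 1)).1.2 := by rw [hs, hb_succ]; exact le_sup_right
    _ ≤ (s n).1.2 := hb_mono hkn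

end Separating

end

/-- A join-semilattice `P` contains an infinite independent subset iff it has an
infinite separating chain of ideals. -/
theorem infinite_indep_iff_separating_chain {P : Type*} [SemilatticeSup P] :
    (∃ X : Set P, X.Infinite ∧ IndepSet X) ↔
      ∃ 𝓘 : Set (Set P), (∀ I ∈ 𝓘, IsIdeal I) ∧ IsChain (· ⊆ ·) 𝓘 ∧ 𝓘.Infinite ∧
        Separating 𝓘 := by
  constructor
  · rintro ⟨X, hX, hind⟩
    let e := hX.natEmbedding
    exact (hind.indepFamily (fun _ _ h => e.injective (Subtype.ext h))
      fun n => (e n).2).exists_separating_chain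
  · rintro ⟨𝓘, h𝓘, hc, hinf, hsep⟩
    obtain ⟨a, ha⟩ := hsep.exists_indepFamily h𝓘 hc hinf
    exact ⟨range a, infinite_range_of_injective ha.injective, ha.indepSet_range⟩
end
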